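/- For any natural number P ≥ 2 and dimension d with log(P)/d < (1 - 2/10)^2/4, there exists a set of P distinct vectors b_1, ..., b_P in {-1,1}^d such that for any two distinct indices l, l', the Hamming distance ‖b_l - b_{l'}‖_0 is at least d/10. -/
import Mathlib


open Finset

private lemma stmt0_exp_le_inv_aux {x : ℝ} (hx1 : x < 1) : Real.exp x ≤ (1 - x)⁻¹ := by
  have h1 : 1 - x ≤ Real.exp (-x) := by
    have := Real.add_one_le_exp (-x); linarith
  have h2 : 0 < 1 - x := by linarith
  have h3 : (Real.exp (-x))⁻¹ ≤ (1 - x)⁻¹ := inv_anti₀ h2 h1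
  rwa [← Real.exp_neg, neg_neg] at h3

private lemma stmt0_numeric : Real.exp (13/25) * (1 + Real.exp (-2)) ≤ 2 := by
  have h1 : Real.exp (13/25) ≤ (400/387)^16 := by
    have e1 : Real.exp (13/400) ≤ 400/387 := by
      have := stmt0_exp_le_inv_aux (x := 13/400) (by norm_num)
      calc Real.exp (13/400) ≤ (1 - 13/400)⁻¹ := this
        _ = 400/387 := by norm_num
    calc Real.exp (13/25) = Real.exp (13/400) ^ 16 := by
          rw [← Real.exp_nat_mul]; norm_num
      _ ≤ (400/387)^16 := pow_le_pow_left₀ (Real.exp_nonneg _) e1 16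
  have h2 : Real.exp (-2) ≤ (8/9:ℝ)^16 := by
    have e1 : Real.exp (-(1/8)) ≤ 8/9 := by
      have h3 : (9/8:ℝ) ≤ Real.exp (1/8) := by
        have := Real.add_one_le_exp (1/8:ℝ); linarith
      rw [Real.exp_neg]
      calc (Real.exp (1/8))⁻¹ ≤ ((9:ℝ)/8)⁻¹ := inv_anti₀ (by norm_num) h3
        _ = 8/9 := by norm_num
    calc Real.exp (-2) = Real.exp (-(1/8)) ^ 16 := by
          rw [← Real.exp_nat_mul]; norm_num
      _ ≤ (8/9:ℝ)^16 := pow_le_pow_left₀ (Real.exp_nonneg _) e1 16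
  calc Real.exp (13/25) * (1 + Real.exp (-2)) ≤ (400/387)^16 * (1 + (8/9:ℝ)^16) := by
        have := Real.exp_nonneg (-2)
        apply mul_le_mul h1 (by linarith) (by linarith) (by positivity)
    _ ≤ 2 := by norm_num

private lemma stmt0_ball_card_le (d : ℕ) (v : Fin d → Bool) :
    ((univ.filter (fun x : Fin d → Bool =>
        ((univ.filter (fun r => x r ≠ v r)).card : ℝ) < d/10)).card : ℝ)
      ≤ Real.exp (d/5) * (1 + Real.exp (-2))^d := by
  classical
  set ham : (Fin d → Bool) → ℕ := fun x => (univ.filter (fun r => x r ≠ v r)).card with hham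
  have step1 : ((univ.filter (fun x : Fin d → Bool => ((ham x : ℝ) < d/10))).card : ℝ)
      ≤ ∑ x : Fin d → Bool, Real.exp (2 * ((d:ℝ)/10 - ham x)) := by
    rw [Finset.card_filter]
    push_cast
    apply Finset.sum_le_sum
    intro x _
    by_cases hx : (ham x : ℝ) < d/10
    · simp only [hx, if_pos]
      have : (0:ℝ) ≤ 2 * ((d:ℝ)/10 - ham x) := by linarith
      calc (1:ℝ) = Real.exp 0 := by simp
        _ ≤ _ := Real.exp_le_exp.2 this
    · simp only [hx, if_neg]
      positivity
  have step2 : ∀ x : Fin d → Bool,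
      Real.exp (2 * ((d:ℝ)/10 - ham x))
        = Real.exp ((d:ℝ)/5) * ∏ r : Fin d, (if x r ≠ v r then Real.exp (-2) else 1) := by
    intro x
    have hh : (ham x : ℝ) = ∑ r : Fin d, (if x r ≠ v r then (1:ℝ) else 0) := by
      simp only [hham, Finset.card_filter]; push_cast; rfl
    rw [show 2 * ((d:ℝ)/10 - ham x) = (d:ℝ)/5 + ((-2) * (ham x : ℝ)) by ring, hh,
      Finset.mul_sum]
    rw [Real.exp_add, Real.exp_sum]
    congr 1
    apply Finset.prod_congr rfl
    intro r _
    by_cases hr : x r ≠ v r <;> simp [hr]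
  have step3 : ∑ x : Fin d → Bool, ∏ r : Fin d, (if x r ≠ v r then Real.exp (-2) else 1)
      = (1 + Real.exp (-2))^d := by
    rw [← Fintype.piFinset_univ, ← Finset.prod_univ_sum (fun _ => (univ : Finset Bool))
      (fun r b => if b ≠ v r then Real.exp (-2) else 1)]
    have hr : ∀ r : Fin d, (∑ j : Bool, if j ≠ v r then Real.exp (-2) else 1)
        = 1 + Real.exp (-2) := by
      intro r
      cases hvr : v r <;> simp [Fintype.sum_bool, hvr] <;> ring
    calc (∏ r : Fin d, ∑ j : Bool, if j ≠ v r then Real.exp (-2) else 1)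
        = ∏ _r : Fin d, (1 + Real.exp (-2)) := Finset.prod_congr rfl (fun r _ => hr r)
      _ = (1 + Real.exp (-2))^d := by simp
  calc _ ≤ ∑ x : Fin d → Bool, Real.exp (2 * ((d:ℝ)/10 - ham x)) := step1
    _ = ∑ x : Fin d → Bool, Real.exp ((d:ℝ)/5)
          * ∏ r : Fin d, (if x r ≠ v r then Real.exp (-2) else 1) :=
        Finset.sum_congr rfl (fun x _ => step2 x)
    _ = Real.exp ((d:ℝ)/5) * ∑ x : Fin d → Bool,
          ∏ r : Fin d, (if x r ≠ v r then Real.exp (-2) else 1) := by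
        rw [Finset.mul_sum]
    _ = Real.exp (d/5) * (1 + Real.exp (-2))^d := by rw [step3]

private lemma stmt0_exists_code (P d : ℕ) (hP : 2 ≤ P) (hd : 0 < d)
    (hmain : (P:ℝ)^2 * (Real.exp (d/5) * (1 + Real.exp (-2))^d) < 2^d) :
    ∃ S : Finset (Fin d → Bool), S.card = P ∧
      ∀ x ∈ S, ∀ y ∈ S, x ≠ y →
        (d:ℝ)/10 ≤ ((univ.filter (fun r => x r ≠ y r)).card : ℝ) := by
  classical
  set E : ℝ := Real.exp (d/5) * (1 + Real.exp (-2))^d with hE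
  have hEpos : 0 < E := by rw [hE]; positivity
  set Ball : (Fin d → Bool) → Finset (Fin d → Bool) := fun v =>
    univ.filter (fun x => ((univ.filter (fun r => x r ≠ v r)).card : ℝ) < d/10) with hBall
  have hdR : (0:ℝ) < d := by exact_mod_cast hd
  have claim : ∀ n : ℕ, n ≤ P → ∃ S : Finset (Fin d → Bool), S.card = n ∧
      ∀ x ∈ S, ∀ y ∈ S, x ≠ y →
        (d:ℝ)/10 ≤ ((univ.filter (fun r => x r ≠ y r)).card : ℝ) := by
    intro n
    induction n with
    | zero => exact fun _ => ⟨∅, by simp, by simp⟩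
    | succ n ih =>
      intro hn
      obtain ⟨S, hScard, hSpair⟩ := ih (Nat.le_of_succ_le hn)
      have hcard : ((S.biUnion Ball).card : ℝ) < 2^d := by
        calc ((S.biUnion Ball).card : ℝ) ≤ ∑ v ∈ S, ((Ball v).card : ℝ) := by
              exact_mod_cast Finset.card_biUnion_le
          _ ≤ ∑ _v ∈ S, E := Finset.sum_le_sum (fun v _ => stmt0_ball_card_le d v)
          _ = n * E := by rw [Finset.sum_const, hScard]; simp
          _ < (P:ℝ)^2 * E := by
              apply mul_lt_mul_of_pos_right _ hEpos
              have h1 : n < P := hn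
              have h2 : (P:ℝ) ≤ (P:ℝ)^2 := by
                nlinarith [show (2:ℝ) ≤ P by exact_mod_cast hP]
              have : (n:ℝ) < P := by exact_mod_cast h1
              linarith
          _ < 2^d := hmain
      have hlt : (S.biUnion Ball).card < Fintype.card (Fin d → Bool) := by
        have h2 : (Fintype.card (Fin d → Bool) : ℝ) = 2^d := by
          simp [Fintype.card_fun]
        have := hcard
        rw [← h2] at this
        exact_mod_cast this
      obtain ⟨v, hv⟩ : ∃ v, v ∉ S.biUnion Ball := by
        by_contra hcon
        push_neg at hcon
        have : (univ : Finset (Fin d → Bool)) ⊆ S.biUnion Ball := fun x _ => hcon x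
        have := Finset.card_le_card this
        rw [Finset.card_univ] at this
        omega
      have hvdist : ∀ x ∈ S,
          (d:ℝ)/10 ≤ ((univ.filter (fun r => v r ≠ x r)).card : ℝ) := by
        intro x hx
        by_contra hcon
        push_neg at hcon
        exact hv (Finset.mem_biUnion.2 ⟨x, hx, by simp [hBall, hcon]⟩)
      have hsymm : ∀ x : Fin d → Bool, (univ.filter (fun r => x r ≠ v r)) =
          (univ.filter (fun r => v r ≠ x r)) := by
        intro x; apply Finset.filter_congr; intro r _; simp [ne_comm]
      have hvS : v ∉ S := by
        intro hvin
        have := hvdist v hvin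
        simp at this
        linarith
      refine ⟨insert v S, ?_, ?_⟩
      · rw [Finset.card_insert_of_notMem hvS, hScard]
      · intro x hx y hy hxy
        rcases Finset.mem_insert.1 hx with rfl | hx' <;>
          rcases Finset.mem_insert.1 hy with rfl | hy'
        · exact absurd rfl hxy
        · exact hvdist y hy'
        · rw [hsymm x]
          exact hvdist x hx'
        · exact hSpair x hx' y hy' hxy
  exact claim P le_rfl

theorem stmt0 (P d : ℕ) (hP : 2 ≤ P) (hd : 0 < d)
    (h : Real.log P / d < (1 - 2/10)^2 / 4) :
    ∃ b : Fin P → (Fin d → ℝ),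
      (∀ l r, b l r = 1 ∨ b l r = -1) ∧
      Function.Injective b ∧
      ∀ l l', l ≠ l' →
        (d : ℝ) / 10 ≤ ((Finset.univ.filter (fun r => b l r ≠ b l' r)).card : ℝ) := by
  classical
  have hdR : (0:ℝ) < d := by exact_mod_cast hd
  have hPR : (0:ℝ) < P := by
    have : (2:ℝ) ≤ P := by exact_mod_cast hP
    linarith
  have hmain : (P:ℝ)^2 * (Real.exp (d/5) * (1 + Real.exp (-2))^d) < 2^d := by
    have hlog : Real.log P < 4/25 * d := by
      have h' : Real.log P / d < 4/25 := by norm_num at h ⊢; linarith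
      calc Real.log P = (Real.log P / d) * d := by field_simp
        _ < 4/25 * d := by apply mul_lt_mul_of_pos_right h' hdR
    have hPsq : (P:ℝ)^2 = Real.exp (2 * Real.log P) := by
      rw [show 2 * Real.log P = Real.log P + Real.log P by ring, Real.exp_add,
        Real.exp_log hPR, sq]
    calc (P:ℝ)^2 * (Real.exp (d/5) * (1 + Real.exp (-2))^d)
        = Real.exp (2 * Real.log P + d/5) * (1 + Real.exp (-2))^d := by
          rw [hPsq, Real.exp_add]; ring
      _ < Real.exp ((13/25) * d) * (1 + Real.exp (-2))^d := by
          apply mul_lt_mul_of_pos_right _ (by positivity)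
          apply Real.exp_lt_exp.2; linarith
      _ = (Real.exp (13/25) * (1 + Real.exp (-2)))^d := by
          rw [mul_pow, mul_comm (13/25:ℝ) (d:ℝ), Real.exp_nat_mul]
      _ ≤ 2^d := pow_le_pow_left₀ (by positivity) stmt0_numeric d
  obtain ⟨S, hScard, hSpair⟩ := stmt0_exists_code P d hP hd hmain
  let e : Fin P ≃ {x // x ∈ S} := (Finset.equivFinOfCardEq hScard).symm
  have hiff : ∀ (l l' : Fin P) (r : Fin d),
      ((if (e l).1 r then (1:ℝ) else -1) ≠ (if (e l').1 r then (1:ℝ) else -1)) ↔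
        ((e l).1 r ≠ (e l').1 r) := by
    intro l l' r
    by_cases h1 : (e l).1 r <;> by_cases h2 : (e l').1 r <;> simp [h1, h2] <;> norm_num
  refine ⟨fun l r => if (e l).1 r then 1 else -1, ?_, ?_, ?_⟩
  · intro l r; by_cases hb : (e l).1 r <;> simp [hb]
  · intro l l' hll
    have hv : (e l).1 = (e l').1 := by
      funext r
      have hr := congrFun hll r
      simp only at hr
      by_contra hne
      exact ((hiff l l' r).2 hne) hr
    exact e.injective (Subtype.ext hv)
  · intro l l' hll
    have hne : (e l).1 ≠ (e l').1 := fun hh => hll (e.injective (Subtype.ext hh))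
    have key := hSpair _ (e l).2 _ (e l').2 hne
    have heq : (univ.filter (fun r =>
          (if (e l).1 r then (1:ℝ) else -1) ≠ (if (e l').1 r then (1:ℝ) else -1)))
        = (univ.filter (fun r => (e l).1 r ≠ (e l').1 r)) := by
      apply Finset.filter_congr
      intro r _
      exact hiff l l' r
    simpa [heq] using key
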